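/- The queue automaton of Figure 5 computes the doubling function: it performs a computation and for every input word w ∈ {a,b}* produces output ww. -/

import Mathlib

/-- A labelled transition system with silent action `τ` modelled as `none`. -/
structure LTS (S A : Type) where
  tr : S → Option A → S → Prop
  fin : S → Prop

/-- Zero or more τ-steps. -/
def LTS.tauStar {S A : Type} (L : LTS S A) : S → S → Prop :=
  Relation.ReflTransGen (fun s t => L.tr s none t)

/-- `s →(a) t` : either `s →a t`, or `a = τ` and `s = t`. -/
def LTS.optStep {S A : Type} (L : LTS S A) (s : S) (a : Option A) (t : S) : Prop :=
  L.tr s a t ∨ (a = none ∧ s = t)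

/-- A symmetric relation `R` is a strong bisimulation. -/
def IsStrongBisim {S A : Type} (L : LTS S A) (R : S → S → Prop) : Prop :=
  (∀ s t, R s t → R t s) ∧
  (∀ s t, R s t →
    (∀ a s', L.tr s a s' → ∃ t', L.tr t a t' ∧ R s' t') ∧
    (L.fin s → L.fin t))

/-- Strong bisimilarity: related by some strong bisimulation. -/
def Bisim {S A : Type} (L : LTS S A) (s t : S) : Prop :=
  ∃ R, IsStrongBisim L R ∧ R s t

/-- A symmetric relation `R` is a branching bisimulation. -/
def IsBranchingBisim {S A : Type} (L : LTS S A) (R : S → S → Prop) : Prop :=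
  (∀ s t, R s t → R t s) ∧
  (∀ s t, R s t →
    (∀ a s', L.tr s a s' →
      ∃ t'' t', L.tauStar t t'' ∧ L.optStep t'' a t' ∧ R s t'' ∧ R s' t') ∧
    (L.fin s → ∃ t', L.tauStar t t' ∧ L.fin t'))

/-- Branching bisimilarity: related by some branching bisimulation. -/
def BBisim {S A : Type} (L : LTS S A) (s t : S) : Prop :=
  ∃ R, IsBranchingBisim L R ∧ R s t

/-- Weak word transitions: τ-steps do not contribute to the word. -/
inductive WStep {S A : Type} (L : LTS S A) : S → List A → S → Prop
  | refl (s : S) : WStep L s [] s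
  | act {s t u : S} {a : A} {w : List A} :
      L.tr s (some a) t → WStep L t w u → WStep L s (a :: w) u
  | tau {s t u : S} {w : List A} :
      L.tr s none t → WStep L t w u → WStep L s w u

/-- The language of a state: words leading to a terminating state. -/
def LTS.lang {S A : Type} (L : LTS S A) (s : S) : Set (List A) :=
  { w | ∃ t, WStep L s w t ∧ L.fin t }

/-- A deterministic LTS. -/
def LTS.Deterministic {S A : Type} (L : LTS S A) : Prop :=
  (∀ s a t u, L.tr s a t → L.tr s a u → t = u) ∧
  (∀ s t, L.tr s none t → ∀ a u, ¬ L.tr s (some a) u)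

/-- The head condition of a queue-automaton transition: `ε`, `*`, or a datum. -/
inductive Head (D : Type) where
  | emp : Head D
  | star : Head D
  | data (d : D) : Head D

/-- A queue automaton. -/
structure QA (S A D : Type) where
  tr : S → Option A → Head D → List D → S → Prop
  init : S
  fin : S → Prop

/-- Effect of a transition with head condition `h` enqueueing `δ` on the queue
contents (head of the queue is the rightmost element, enqueueing prepends). -/
inductive QStep {D : Type} : Head D → List D → List D → List D → Prop
  | emp (δ : List D) : QStep Head.emp δ [] δ
  | data (d : D) (δ ζ : List D) : QStep (Head.data d) δ (ζ ++ [d]) (δ ++ ζ)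
  | star (δ ζ : List D) : QStep Head.star δ ζ (δ ++ ζ)

/-- The process graph of a queue automaton. -/
def QA.proc {S A D : Type} (Q : QA S A D) : LTS (S × List D) A where
  tr := fun c a c' => ∃ h δ, Q.tr c.1 a h δ c'.1 ∧ QStep h δ c.2 c'.2
  fin := fun c => Q.fin c.1

/-- The queue automaton has finitely many transitions. -/
def QA.FiniteTrans {S A D : Type} (Q : QA S A D) : Prop :=
  Set.Finite {x : S × Option A × Head D × List D × S |
    Q.tr x.1 x.2.1 x.2.2.1 x.2.2.2.1 x.2.2.2.2}

inductive AB where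
  | a : AB
  | b : AB

/-- Actions: inputs `i?d`, outputs `o!d`, and `o!ε`. -/
inductive IOAct where
  | inp (d : AB) : IOAct
  | out (d : AB) : IOAct
  | oute : IOAct

/-- Data of the automaton of Figure 5: `a`, `b` and the bookmark `$`. -/
inductive Dd where
  | da : Dd
  | db : Dd
  | dollar : Dd

def ABtoD : AB → Dd
  | AB.a => Dd.da
  | AB.b => Dd.db

inductive StDbl where
  | s0 : StDbl
  | s1 : StDbl
  | s2 : StDbl
  | s3 : StDbl

/-- Transitions of the queue automaton of Figure 5. -/
inductive dblTr : StDbl → Option IOAct → Head Dd → List Dd → StDbl → Prop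
  | read (d : AB) : dblTr StDbl.s0 (some (IOAct.inp d)) Head.star [ABtoD d] StDbl.s0
  | first (d : AB) :
      dblTr StDbl.s0 (some (IOAct.out d)) (Head.data (ABtoD d)) [ABtoD d, Dd.dollar] StDbl.s1
  | empty : dblTr StDbl.s0 (some IOAct.oute) Head.emp [] StDbl.s3
  | recycle (d : AB) :
      dblTr StDbl.s1 (some (IOAct.out d)) (Head.data (ABtoD d)) [ABtoD d] StDbl.s1
  | mark : dblTr StDbl.s1 none (Head.data Dd.dollar) [] StDbl.s2
  | second (d : AB) : dblTr StDbl.s2 (some (IOAct.out d)) (Head.data (ABtoD d)) [] StDbl.s2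
  | done : dblTr StDbl.s2 none Head.emp [] StDbl.s3

/-- The queue automaton of Figure 5. -/
def dblQA : QA StDbl IOAct Dd :=
  { tr := dblTr, init := StDbl.s0, fin := fun s => s = StDbl.s3 }

/-- The input projection of a word of actions. -/
def inProj : List IOAct → List AB :=
  List.filterMap fun x => match x with | IOAct.inp d => some d | _ => none

/-- The output projection of a word of actions. -/
def outProj : List IOAct → List AB :=
  List.filterMap fun x => match x with | IOAct.out d => some d | _ => none

/-!
Determinism: two transitions of the same state with the same label are the same rule, and the
τ-steps of `s1` and `s2` need `$` at the head or an empty queue, which no visible step from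
those states tolerates. Soundness: every step preserves an invariant relating the configuration
to the input read and the output written so far, and in `s3` that invariant says the output is
the input twice. Completeness: read `w`, output its first letter while appending `$`, recycle
the rest of `w` behind `$`, then drain the queue.
-/

theorem WStep.append {S A : Type} {L : LTS S A} {s t u : S} {w₁ w₂ : List A}
    (h₁ : WStep L s w₁ t) (h₂ : WStep L t w₂ u) : WStep L s (w₁ ++ w₂) u := by
  induction h₁ with
  | refl => exact h₂
  | act htr _ ih => exact .act htr (ih h₂)
  | tau htr _ ih => exact .tau htr (ih h₂)

theorem WStep.preserves {S A : Type} {L : LTS S A} {P : S → List A → Prop}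
    (hP : ∀ {s a t h}, P s h → L.tr s a t → P t (h ++ a.toList))
    {s t : S} {w h : List A} (hw : WStep L s w t) (hs : P s h) : P t (h ++ w) := by
  induction hw generalizing h with
  | refl => simpa using hs
  | act htr _ ih => simpa using ih (hP hs htr)
  | tau htr _ ih => simpa using ih (hP hs htr)

theorem QStep.data_iff {D : Type} {d : D} {δ q q' : List D} :
    QStep (Head.data d) δ q q' ↔ ∃ ζ, q = ζ ++ [d] ∧ q' = δ ++ ζ := by
  constructor
  · rintro ⟨⟩; exact ⟨_, rfl, rfl⟩
  · rintro ⟨ζ, rfl, rfl⟩; exact .data d δ ζ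

theorem QStep.right_unique {D : Type} {h : Head D} {δ q q₁ q₂ : List D}
    (h₁ : QStep h δ q q₁) (h₂ : QStep h δ q q₂) : q₁ = q₂ := by
  cases h₁ with
  | emp => cases h₂; rfl
  | star => cases h₂; rfl
  | data d δ ζ =>
    obtain ⟨ζ', hq, rfl⟩ := QStep.data_iff.1 h₂
    rw [List.append_cancel_right hq]

theorem QStep.getLast?_of_data {D : Type} {d : D} {δ q q' : List D}
    (h : QStep (Head.data d) δ q q') : q.getLast? = some d := by
  obtain ⟨ζ, rfl, -⟩ := QStep.data_iff.1 h
  simp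

theorem QStep.eq_nil_of_emp {D : Type} {δ q q' : List D} (h : QStep Head.emp δ q q') :
    q = [] := by
  cases h; rfl

theorem QA.proc_tr_of {S A D : Type} {Q : QA S A D} {s s' : S} {a : Option A} {h : Head D}
    {δ q q' : List D} (htr : Q.tr s a h δ s') (hq : QStep h δ q q') :
    Q.proc.tr (s, q) a (s', q') :=
  ⟨h, δ, htr, hq⟩

theorem ABtoD_injective : Function.Injective ABtoD := by
  rintro (_ | _) (_ | _) h <;> first | rfl | cases h

@[simp] theorem dollar_ne_ABtoD (d : AB) : Dd.dollar ≠ ABtoD d := by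
  cases d <;> nofun

@[simp] theorem inProj_append (l₁ l₂ : List IOAct) :
    inProj (l₁ ++ l₂) = inProj l₁ ++ inProj l₂ :=
  List.filterMap_append

@[simp] theorem outProj_append (l₁ l₂ : List IOAct) :
    outProj (l₁ ++ l₂) = outProj l₁ ++ outProj l₂ :=
  List.filterMap_append

@[simp] theorem inProj_nil : inProj [] = [] := rfl

@[simp] theorem outProj_nil : outProj [] = [] := rfl

@[simp] theorem inProj_cons (a : IOAct) (l : List IOAct) :
    inProj (a :: l) = (match a with | .inp d => [d] | _ => []) ++ inProj l := by
  cases a <;> rfl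

@[simp] theorem outProj_cons (a : IOAct) (l : List IOAct) :
    outProj (a :: l) = (match a with | .out d => [d] | _ => []) ++ outProj l := by
  cases a <;> rfl

@[simp] theorem inProj_map_inp (w : List AB) : inProj (w.map .inp) = w := by
  induction w <;> simp [*]

@[simp] theorem outProj_map_inp (w : List AB) : outProj (w.map .inp) = [] := by
  induction w <;> simp [*]

@[simp] theorem inProj_map_out (w : List AB) : inProj (w.map .out) = [] := by
  induction w <;> simp [*]

@[simp] theorem outProj_map_out (w : List AB) : outProj (w.map .out) = w := by
  induction w <;> simp [*]

-- The first letter of `w` is at the head of the queue, which is the right end of the list.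
def queueOf (w : List AB) : List Dd := (w.map ABtoD).reverse

@[simp] theorem queueOf_nil : queueOf [] = [] := rfl

@[simp] theorem queueOf_eq_nil {w : List AB} : queueOf w = [] ↔ w = [] := by
  simp [queueOf]

@[simp] theorem queueOf_cons (d : AB) (w : List AB) : queueOf (d :: w) = queueOf w ++ [ABtoD d] := by
  simp [queueOf]

@[simp] theorem queueOf_append (v w : List AB) : queueOf (v ++ w) = queueOf w ++ queueOf v := by
  simp [queueOf]

theorem append_queueOf_eq_append_singleton {l ζ : List Dd} {x : Dd} {u : List AB} :
    l ++ queueOf u = ζ ++ [x] ↔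
      (u = [] ∧ l = ζ ++ [x]) ∨ ∃ d u', u = d :: u' ∧ ζ = l ++ queueOf u' ∧ x = ABtoD d := by
  cases u with
  | nil => simp
  | cons d u =>
    simp [← List.append_assoc, eq_comm]

theorem queueOf_eq_append_singleton {ζ : List Dd} {x : Dd} {w : List AB} :
    queueOf w = ζ ++ [x] ↔ ∃ d w', w = d :: w' ∧ ζ = queueOf w' ∧ x = ABtoD d := by
  simpa using append_queueOf_eq_append_singleton (l := []) (ζ := ζ) (x := x) (u := w)

/-- What a run with history `h` knows on reaching configuration `c`. In `s1` the queue reads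
`u $ p` from the head, `p` being the prefix of the input already output once; in `s2` the
queue holds the suffix `u` of the input still missing from the second copy. -/
def DblInvariant : StDbl × List Dd → List IOAct → Prop
  | (.s0, q), h => q = queueOf (inProj h) ∧ outProj h = []
  | (.s1, q), h => ∃ p u, inProj h = p ++ u ∧ outProj h = p ∧ q = queueOf p ++ Dd.dollar :: queueOf u
  | (.s2, q), h => ∃ v u, inProj h = v ++ u ∧ outProj h = inProj h ++ v ∧ q = queueOf u
  | (.s3, _), h => outProj h = inProj h ++ inProj h

theorem DblInvariant.step {c c' : StDbl × List Dd} {a : Option IOAct} {h : List IOAct}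
    (hc : DblInvariant c h) (htr : dblQA.proc.tr c a c') : DblInvariant c' (h ++ a.toList) := by
  obtain ⟨s, q⟩ := c
  obtain ⟨s', q'⟩ := c'
  obtain ⟨hd, δ, htr, hq⟩ := htr
  cases htr <;> simp only [DblInvariant] at hc ⊢
  case read d =>
    cases hq
    obtain ⟨rfl, hout⟩ := hc
    simp [hout]
  case first d =>
    obtain ⟨ζ, rfl, rfl⟩ := QStep.data_iff.1 hq
    obtain ⟨hq, hout⟩ := hc
    obtain ⟨e, u, hin, rfl, he⟩ := queueOf_eq_append_singleton.1 hq.symm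
    obtain rfl := ABtoD_injective he
    exact ⟨[d], u, by simp [hin], by simp [hout], by simp⟩
  case empty =>
    cases hq
    obtain ⟨hq, hout⟩ := hc
    simp [hout, queueOf_eq_nil.1 hq.symm]
  case recycle d =>
    obtain ⟨ζ, rfl, rfl⟩ := QStep.data_iff.1 hq
    obtain ⟨p, u, hin, hout, hq⟩ := hc
    rw [List.append_cons (queueOf p)] at hq
    rcases append_queueOf_eq_append_singleton.1 hq.symm with ⟨-, hq⟩ | ⟨e, u, rfl, rfl, he⟩
    · simp at hq
    obtain rfl := ABtoD_injective he
    exact ⟨p ++ [d], u, by simp [hin], by simp [hout], by simp⟩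
  case mark =>
    obtain ⟨ζ, rfl, rfl⟩ := QStep.data_iff.1 hq
    obtain ⟨p, u, hin, hout, hq⟩ := hc
    rw [List.append_cons (queueOf p)] at hq
    rcases append_queueOf_eq_append_singleton.1 hq.symm with ⟨rfl, hq⟩ | ⟨e, u, -, -, he⟩
    · exact ⟨[], p, by simpa using hin, by simpa [hin] using hout, by simpa [eq_comm] using hq⟩
    · simp at he
  case second d =>
    obtain ⟨ζ, rfl, rfl⟩ := QStep.data_iff.1 hq
    obtain ⟨v, u, hin, hout, hq⟩ := hc
    obtain ⟨e, u, rfl, rfl, he⟩ := queueOf_eq_append_singleton.1 hq.symm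
    obtain rfl := ABtoD_injective he
    exact ⟨v ++ [d], u, by simp [hin], by simp [hout, hin], by simp⟩
  case done =>
    cases hq
    obtain ⟨v, u, hin, hout, hq⟩ := hc
    obtain rfl := queueOf_eq_nil.1 hq.symm
    simp_all

theorem dblQA_proc_deterministic : dblQA.proc.Deterministic := by
  constructor
  · rintro ⟨s, q⟩ a ⟨t, q₁⟩ ⟨u, q₂⟩ ⟨_, _, h₁, hq₁⟩ ⟨_, _, h₂, hq₂⟩
    cases h₁ <;> cases h₂ <;> exact congrArg (Prod.mk _) (hq₁.right_unique hq₂)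
  · rintro ⟨s, q⟩ ⟨t, q₁⟩ ⟨_, _, hτ, hq₁⟩ a ⟨u, q₂⟩ ⟨_, _, h₂, hq₂⟩
    cases hτ <;> cases h₂
    · simpa using hq₁.getLast?_of_data.symm.trans hq₂.getLast?_of_data
    · obtain rfl : q = [] := hq₁.eq_nil_of_emp
      simpa using hq₂.getLast?_of_data

theorem dblQA_outProj_eq_of_mem_lang {word : List IOAct}
    (hw : word ∈ dblQA.proc.lang (dblQA.init, [])) : outProj word = inProj word ++ inProj word := by
  obtain ⟨⟨s, q⟩, hrun, rfl⟩ := hw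
  simpa [DblInvariant] using hrun.preserves (P := DblInvariant) (h := []) DblInvariant.step ⟨rfl, rfl⟩

theorem dblQA_run_read (w v : List AB) :
    WStep dblQA.proc (.s0, queueOf w) (v.map .inp) (.s0, queueOf (w ++ v)) := by
  induction v generalizing w with
  | nil => simpa using .refl _
  | cons d v ih =>
    refine .act (QA.proc_tr_of (dblTr.read d) (.star _ _)) ?_
    simpa using ih (w ++ [d])

theorem dblQA_run_drain (u : List AB) : WStep dblQA.proc (.s2, queueOf u) (u.map .out) (.s3, []) := by
  induction u with
  | nil => exact .tau (QA.proc_tr_of dblTr.done (.emp [])) (.refl _)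
  | cons d u ih =>
    exact .act (QA.proc_tr_of (dblTr.second d) (QStep.data_iff.2 ⟨queueOf u, by simp, by simp⟩)) ih

theorem dblQA_run_copy (p u : List AB) :
    WStep dblQA.proc (.s1, queueOf p ++ Dd.dollar :: queueOf u) ((u ++ (p ++ u)).map .out) (.s3, []) := by
  induction u generalizing p with
  | nil =>
    simpa using .tau (QA.proc_tr_of dblTr.mark (QStep.data_iff.2 ⟨queueOf p, by simp, rfl⟩))
      (dblQA_run_drain p)
  | cons d u ih =>
    refine .act (QA.proc_tr_of (dblTr.recycle d)
      (QStep.data_iff.2 ⟨queueOf p ++ Dd.dollar :: queueOf u, by simp, rfl⟩)) ?_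
    simpa using ih (p ++ [d])

theorem dblQA_exists_mem_lang (w : List AB) :
    ∃ word ∈ dblQA.proc.lang (dblQA.init, []), inProj word = w ∧ outProj word = w ++ w := by
  cases w with
  | nil =>
    exact ⟨[.oute], ⟨(.s3, []), .act (QA.proc_tr_of dblTr.empty (.emp [])) (.refl _), rfl⟩,
      rfl, rfl⟩
  | cons d w =>
    refine ⟨(d :: w).map .inp ++ ((d :: w) ++ (d :: w)).map .out, ⟨(.s3, []), ?_, rfl⟩,
      by simp, by simp⟩
    exact (dblQA_run_read [] (d :: w)).append <| .act (QA.proc_tr_of (dblTr.first d)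
      (QStep.data_iff.2 ⟨queueOf w, by simp, rfl⟩)) (dblQA_run_copy [d] w)

/-- The queue automaton of Figure 5 performs a computation and
computes the doubling function `f(w) = ww` on `{a,b}*`: its process graph is
deterministic, every accepted word has output equal to the double of its
input, and every input `w` yields an accepted word with output `ww`. -/
theorem dblQA_computes_doubling :
    dblQA.proc.Deterministic ∧
    (∀ word ∈ dblQA.proc.lang (dblQA.init, []),
        outProj word = inProj word ++ inProj word) ∧
    (∀ w : List AB, ∃ word ∈ dblQA.proc.lang (dblQA.init, []),
        inProj word = w ∧ outProj word = w ++ w) :=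
  ⟨dblQA_proc_deterministic, fun _ => dblQA_outProj_eq_of_mem_lang, dblQA_exists_mem_lang⟩
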